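/- arXiv:2107.13443 — 8 statements merged into one kernel-verified Lean document; each statement's English description precedes it below -/
import Mathlib

section
/- If an oriented graph G admits a homomorphism to a consistent sub-orientation of the Kneser graph KG_{a,b}, then for every positive integer c there exists a consistent sub-orientation of KG_{ac,bc} to which G admits a homomorphism. -/
/-- An oriented graph: a directed graph with no loops and no directed 2-cycles. -/
structure OGraph (V : Type*) where
  adj : V → V → Prop
  irrefl : ∀ v, ¬ adj v v
  asymm : ∀ u v, adj u v → ¬ adj v u

/-- A homomorphism of oriented graphs. -/
def OGraph.Hom {V W : Type*} (G : OGraph V) (H : OGraph W) (f : V → W) : Prop :=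
  ∀ u v, G.adj u v → H.adj (f u) (f v)

/-- `f` is a `b`-fold oriented `k`-coloring of `G`. -/
def IsFoldColoring {V : Type*} (G : OGraph V) (b k : ℕ) (f : V → Finset (Fin k)) : Prop :=
  (∀ v, (f v).card = b) ∧
  (∀ u v, G.adj u v → Disjoint (f u) (f v)) ∧
  (∀ x y z w, G.adj x y → G.adj z w → ¬ Disjoint (f x) (f w) → Disjoint (f y) (f z))

/-- The `b`-fold oriented chromatic number. -/
noncomputable def foldChrom {V : Type*} (G : OGraph V) (b : ℕ) : ℕ :=
  sInf {k | ∃ f : V → Finset (Fin k), IsFoldColoring G b k f}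

/-- The fractional oriented chromatic number: the infimum of `k/b` over all
`b`-fold oriented `k`-colorings. -/
noncomputable def fracChrom {V : Type*} (G : OGraph V) : ℝ :=
  sInf {x : ℝ | ∃ (b k : ℕ) (f : V → Finset (Fin k)),
    0 < b ∧ IsFoldColoring G b k f ∧ x = (k : ℝ) / b}


/-- Vertices of the Kneser graph `KG_{a,b}`: `b`-element subsets of an `a`-element set. -/
def KneserVert (a b : ℕ) := {s : Finset (Fin a) // s.card = b}

/-- A consistent sub-orientation of the Kneser graph `KG_{a,b}`: an orientation of a
subgraph of `KG_{a,b}` such that for any two arcs `x → y` and `w → z`,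
`x ∩ z ≠ ∅` implies `y ∩ w = ∅`. -/
structure ConsistentSubOrientation (a b : ℕ) where
  adj : KneserVert a b → KneserVert a b → Prop
  sub : ∀ x y, adj x y → Disjoint x.val y.val
  consistent : ∀ x y w z, adj x y → adj w z → ¬ Disjoint x.val z.val → Disjoint y.val w.val

/-!
Blow up every point of the ground set `Fin a` into `c` points of `Fin (a * c)`. This sends
`b`-sets to `(b * c)`-sets and preserves disjointness, while non-disjointness of blown-up sets
pulls back to the original sets; since both the Kneser condition and consistency are phrased
purely through disjointness, the blown-up arcs of a consistent sub-orientation of `KG_{a,b}`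
form a consistent sub-orientation of `KG_{ac,bc}`.
-/

open Finset

namespace KneserVert

variable {a b : ℕ}

def blowup (c : ℕ) (x : KneserVert a b) : KneserVert (a * c) (b * c) :=
  ⟨(x.val ×ˢ univ).map finProdFinEquiv.toEmbedding, by simp [x.2]⟩

theorem disjoint_blowup {c : ℕ} {x y : KneserVert a b} (h : Disjoint x.val y.val) :
    Disjoint (x.blowup c).val (y.blowup c).val :=
  (disjoint_map _).mpr (disjoint_product.mpr (Or.inl h))

end KneserVert

namespace ConsistentSubOrientation

open KneserVert

variable {a b : ℕ}

def blowup (K : ConsistentSubOrientation a b) (c : ℕ) :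
    ConsistentSubOrientation (a * c) (b * c) where
  adj x' y' := ∃ x y, K.adj x y ∧ x' = x.blowup c ∧ y' = y.blowup c
  sub := by
    rintro _ _ ⟨x, y, hxy, rfl, rfl⟩
    exact disjoint_blowup (K.sub x y hxy)
  consistent := by
    rintro _ _ _ _ ⟨x, y, hxy, rfl, rfl⟩ ⟨w, z, hwz, rfl, rfl⟩ hxz
    exact disjoint_blowup (K.consistent x y w z hxy hwz fun h => hxz (disjoint_blowup h))

theorem adj_blowup (K : ConsistentSubOrientation a b) {c : ℕ} {x y : KneserVert a b}
    (h : K.adj x y) : (K.blowup c).adj (x.blowup c) (y.blowup c) :=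
  ⟨x, y, h, rfl, rfl⟩

end ConsistentSubOrientation

theorem stmt2_general {V : Type*} (G : OGraph V) (a b : ℕ)
    (K : ConsistentSubOrientation a b) (f : V → KneserVert a b)
    (hf : ∀ u v, G.adj u v → K.adj (f u) (f v)) (c : ℕ) :
    ∃ (K' : ConsistentSubOrientation (a * c) (b * c)) (g : V → KneserVert (a * c) (b * c)),
      ∀ u v, G.adj u v → K'.adj (g u) (g v) :=
  ⟨K.blowup c, fun v => (f v).blowup c, fun u v h => K.adj_blowup (hf u v h)⟩

theorem stmt2 {V : Type*} (G : OGraph V) (a b : ℕ)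
    (K : ConsistentSubOrientation a b) (f : V → KneserVert a b)
    (hf : ∀ u v, G.adj u v → K.adj (f u) (f v)) (c : ℕ) (hc : 0 < c) :
    ∃ (K' : ConsistentSubOrientation (a * c) (b * c)) (g : V → KneserVert (a * c) (b * c)),
      ∀ u v, G.adj u v → K'.adj (g u) (g v) :=
  stmt2_general G a b K f hf c
end

section
/- An oriented graph G satisfies χ_o^*(G) ≤ a/b if and only if G admits a homomorphism to a consistent sub-orientation of the Kneser graph KG_{ac,bc} for some positive integer c. -/
open Finset

lemma ratSolution {ι κ : Type*} [Fintype ι] [Fintype κ] (c : κ → ι → ℚ) (d : κ → ℚ)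
    (h : ∃ x : ι → ℝ, ∀ i, (d i : ℝ) ≤ ∑ j, (c i j : ℝ) * x j) :
    ∃ q : ι → ℚ, ∀ i, d i ≤ ∑ j, c i j * q j := by
  classical
  obtain ⟨x, hx⟩ := h
  set W : Submodule ℚ ℝ := Submodule.span ℚ (insert (1:ℝ) (Set.range x)) with hW
  haveI : FiniteDimensional ℚ W :=
    FiniteDimensional.span_of_finite ℚ ((Set.finite_range x).insert 1)
  have h1 : (1:ℝ) ∈ W := Submodule.subset_span (Set.mem_insert _ _)
  set w1 : W := ⟨1, h1⟩ with hw1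
  have hw1ne : w1 ≠ 0 := by
    intro hcon
    exact one_ne_zero (α := ℝ) (congrArg Subtype.val hcon)
  have li : LinearIndepOn ℚ id ({w1} : Set W) :=
    LinearIndepOn.singleton hw1ne
  set B : Module.Basis _ ℚ W := Module.Basis.extend li with hB
  haveI : Fintype (li.extend (Set.subset_univ _)) := FiniteDimensional.fintypeBasisIndex B
  have he1mem : w1 ∈ li.extend (Set.subset_univ _) := Module.Basis.subset_extend li rfl
  set e1 : li.extend (Set.subset_univ ({w1} : Set W)) := ⟨w1, he1mem⟩ with he1
  have hxW : ∀ j, x j ∈ W := fun j => Submodule.subset_span (Set.mem_insert_of_mem _ ⟨j, rfl⟩)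
  set xW : ι → W := fun j => ⟨x j, hxW j⟩ with hxWdef
  set rep : ι → _ →₀ ℚ := fun j => B.repr (xW j) with hrep
  set β : li.extend (Set.subset_univ ({w1} : Set W)) → ℝ := fun t => ((t : W) : ℝ) with hβ
  have hβe1 : β e1 = 1 := rfl
  -- representation of x j
  have hxrep : ∀ j, x j = ∑ t, (rep j t : ℝ) * β t := by
    intro j
    have := B.sum_repr (xW j)
    have hcoe := congrArg (Subtype.val) this
    push_cast at hcoe
    rw [show x j = ((xW j : W) : ℝ) from rfl, ← hcoe]
    refine Finset.sum_congr rfl fun t _ => ?_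
    rw [Rat.smul_def, hB, Module.Basis.extend_apply_self]
  set C : κ → _ → ℚ := fun i t => ∑ j, c i j * rep j t with hC
  set valx : κ → ℝ := fun i => ∑ j, (c i j : ℝ) * x j with hvalx
  have hx' : ∀ i, (d i : ℝ) ≤ valx i := fun i => hx i
  have hvalsum : ∀ i, valx i = ∑ t, (C i t : ℝ) * β t := by
    intro i
    calc valx i = ∑ j, ∑ t, (c i j : ℝ) * ((rep j t : ℝ) * β t) := by
          refine sum_congr rfl fun j _ => ?_
          rw [show (c i j : ℝ) * x j = (c i j : ℝ) * (∑ t, (rep j t : ℝ) * β t) by rw [← hxrep j]]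
          rw [Finset.mul_sum]
      _ = ∑ t, ∑ j, (c i j : ℝ) * ((rep j t : ℝ) * β t) := Finset.sum_comm
      _ = ∑ t, (C i t : ℝ) * β t := by
          refine sum_congr rfl fun t _ => ?_
          rw [hC]
          push_cast
          rw [Finset.sum_mul]
          exact sum_congr rfl fun j _ => by ring
  have hw1repr : B.repr w1 = Finsupp.single e1 1 := by
    have h1 : w1 = B e1 := by rw [hB, Module.Basis.extend_apply_self]
    rw [show B.repr w1 = B.repr (B e1) from congrArg _ h1, Module.Basis.repr_self]
  have htight : ∀ i, valx i = d i → ∀ t, C i t = d i * (Finsupp.single e1 (1:ℚ)) t := by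
    intro i hi t
    have hWeq : (∑ j, c i j • xW j) = (d i) • w1 := by
      apply Subtype.val_injective
      have hL : ((∑ j, c i j • xW j : W) : ℝ) = valx i := by
        rw [AddSubmonoidClass.coe_finset_sum]
        refine sum_congr rfl fun j _ => ?_
        rw [SetLike.val_smul, Rat.smul_def]
      have hR : (((d i) • w1 : W) : ℝ) = (d i : ℝ) := by
        rw [SetLike.val_smul, Rat.smul_def]
        simp [hw1]
      rw [hL, hR, hi]
    have hrepr := congrArg (fun w => (B.repr w) t) hWeq
    simp only [map_sum, map_smul, Finsupp.coe_finset_sum, Finsupp.coe_smul,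
      Finset.sum_apply, Pi.smul_apply, smul_eq_mul] at hrepr
    rw [hw1repr] at hrepr
    simpa [hC, hrep] using hrepr
  set slackSet : Finset κ := univ.filter (fun i => (d i:ℝ) < valx i) with hss
  set Mi : κ → ℝ := fun i => ∑ t ∈ univ.erase e1, |(C i t : ℝ)| with hMi
  have hMinn : ∀ i, 0 ≤ Mi i := fun i => Finset.sum_nonneg fun t _ => abs_nonneg _
  set δ : ℝ := if hs : slackSet.Nonempty then slackSet.inf' hs (fun i => (valx i - d i) / (Mi i + 1)) else 1 with hδ
  have hδpos : 0 < δ := by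
    rw [hδ]; split_ifs with hs
    · rw [Finset.lt_inf'_iff]
      intro i hi
      have h1 : (d i:ℝ) < valx i := (mem_filter.mp hi).2
      have := hMinn i
      apply div_pos <;> linarith
    · norm_num
  have hτ : ∀ t, ∃ qt : ℚ, |β t - qt| < δ := fun t => exists_rat_near (β t) hδpos
  choose τ hτspec using hτ
  have hvalq : ∀ i, ∑ j, c i j * (rep j e1 + ∑ t ∈ univ.erase e1, τ t * rep j t)
      = C i e1 + ∑ t ∈ univ.erase e1, τ t * C i t := by
    intro i
    calc ∑ j, c i j * (rep j e1 + ∑ t ∈ univ.erase e1, τ t * rep j t)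
        = ∑ j, (c i j * rep j e1 + ∑ t ∈ univ.erase e1, c i j * (τ t * rep j t)) := by
          refine sum_congr rfl fun j _ => ?_
          rw [mul_add, Finset.mul_sum]
      _ = (∑ j, c i j * rep j e1) + ∑ j, ∑ t ∈ univ.erase e1, c i j * (τ t * rep j t) :=
          Finset.sum_add_distrib
      _ = C i e1 + ∑ t ∈ univ.erase e1, τ t * C i t := by
          rw [hC, Finset.sum_comm]
          congr 1
          refine sum_congr rfl fun t _ => ?_
          rw [Finset.mul_sum]
          exact sum_congr rfl fun j _ => by ring
  refine ⟨fun j => rep j e1 + ∑ t ∈ univ.erase e1, τ t * rep j t, fun i => ?_⟩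
  rw [hvalq i]
  by_cases hi : (d i:ℝ) < valx i
  · -- slack case
    have hiss : i ∈ slackSet := mem_filter.mpr ⟨mem_univ _, hi⟩
    have hsne : slackSet.Nonempty := ⟨i, hiss⟩
    suffices hgoal : (d i:ℝ) ≤ ((C i e1 + ∑ t ∈ univ.erase e1, τ t * C i t : ℚ) : ℝ) by
      exact_mod_cast hgoal
    push_cast
    have hkey : (C i e1:ℝ) + ∑ t ∈ univ.erase e1, (τ t:ℝ) * (C i t:ℝ)
        = valx i + ∑ t ∈ univ.erase e1, ((τ t:ℝ) - β t) * (C i t:ℝ) := by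
      have hsplit : valx i = (C i e1:ℝ) * β e1 + ∑ t ∈ univ.erase e1, (C i t:ℝ) * β t := by
        rw [hvalsum i, ← Finset.add_sum_erase _ _ (mem_univ e1)]
      have hdiff : ∑ t ∈ univ.erase e1, ((τ t:ℝ) - β t) * (C i t:ℝ)
           = (∑ t ∈ univ.erase e1, (τ t:ℝ) * (C i t:ℝ)) - ∑ t ∈ univ.erase e1, (C i t:ℝ) * β t := by
        rw [← Finset.sum_sub_distrib]
        exact sum_congr rfl fun t _ => by ring
      rw [hsplit, hβe1, mul_one, hdiff]
      ring
    have habs : |∑ t ∈ univ.erase e1, ((τ t:ℝ) - β t) * (C i t:ℝ)| ≤ δ * Mi i := by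
      refine (Finset.abs_sum_le_sum_abs _ _).trans ?_
      rw [hMi, Finset.mul_sum]
      refine Finset.sum_le_sum fun t _ => ?_
      rw [abs_mul]
      have h2 : |(τ t:ℝ) - β t| ≤ δ := by
        have := hτspec t
        rw [abs_sub_comm] at this
        linarith
      exact mul_le_mul_of_nonneg_right h2 (abs_nonneg _)
    have hδle : δ ≤ (valx i - d i) / (Mi i + 1) := by
      rw [hδ, dif_pos hsne]
      exact Finset.inf'_le _ hiss
    have hMlt : δ * Mi i ≤ valx i - d i := by
      have h1 : δ * Mi i ≤ (valx i - d i) / (Mi i + 1) * Mi i :=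
        mul_le_mul_of_nonneg_right hδle (hMinn i)
      have h2 : (valx i - d i) / (Mi i + 1) * Mi i ≤ valx i - d i := by
        rw [div_mul_eq_mul_div, div_le_iff₀ (by linarith [hMinn i])]
        nlinarith [hMinn i, hi]
      linarith
    have hlow := (abs_le.mp habs).1
    rw [hkey]
    linarith [hx' i]
  · -- tight case
    have hieq : valx i = d i := le_antisymm (not_lt.mp hi) (hx' i)
    have ht := htight i hieq
    have h0 : ∀ t ∈ univ.erase e1, τ t * C i t = 0 := by
      intro t hts
      rw [ht t, Finsupp.single_apply, if_neg (fun hcon => (mem_erase.mp hts).1 hcon.symm)]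
      ring
    rw [Finset.sum_eq_zero h0, add_zero, ht e1, Finsupp.single_apply, if_pos rfl, mul_one]

lemma sum_ite_eq_mul {R : Type*} [Semiring R] {α : Type*} [Fintype α] [DecidableEq α]
    (x : α → R) (I : α) (c : R) :
    ∑ J, (if J = I then c else 0) * x J = c * x I := by
  rw [Finset.sum_eq_single I]
  · simp
  · intro b _ hb; simp [hb]
  · simp

def coverSet {V : Type*} [Fintype V] (D : Finset (V × V)) : Set ℝ :=
  {x : ℝ | ∃ (b' k : ℕ) (f : V → Finset (Fin k)), 0 < b' ∧ (∀ v, (f v).card = b') ∧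
    (∀ p ∈ D, Disjoint (f p.1) (f p.2)) ∧ x = (k : ℝ) / b'}

def IndepSet {V : Type*} (D : Finset (V × V)) (I : Finset V) : Prop :=
  ∀ p ∈ D, ¬(p.1 ∈ I ∧ p.2 ∈ I)

lemma keyLemma {V : Type*} [Fintype V] (D : Finset (V × V)) (a b : ℕ) (hb : 0 < b)
    (hne : (coverSet D).Nonempty) (hinf : sInf (coverSet D) ≤ (a : ℝ) / b) :
    ∃ c : ℕ, 0 < c ∧ ∃ g : V → Finset (Fin (a * c)), (∀ v, (g v).card = b * c) ∧
      ∀ p ∈ D, Disjoint (g p.1) (g p.2) := by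
  classical
  set r : ℝ := (a : ℝ) / b with hr
  -- Step 1 : approximate feasible points from colorings
  have happrox : ∀ ε : ℝ, 0 < ε → ∃ x : Finset V → ℝ,
      ((∀ I, 0 ≤ x I) ∧ (∀ I, ¬IndepSet D I → x I = 0) ∧
       (∀ v : V, 1 ≤ ∑ I ∈ univ.filter (fun I => v ∈ I), x I)) ∧ ∑ I, x I < r + ε := by
    intro ε hε
    have hlt : sInf (coverSet D) < r + ε := lt_of_le_of_lt hinf (lt_add_of_pos_right r hε)
    obtain ⟨y, hy, hylt⟩ := exists_lt_of_csInf_lt hne hlt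
    obtain ⟨b', k, f, hb', hcard, hdisj, rfl⟩ := hy
    set cl : Fin k → Finset V := fun i => univ.filter (fun v => i ∈ f v) with hcl
    have hmemcl : ∀ (i : Fin k) (v : V), v ∈ cl i ↔ i ∈ f v := by
      intro i v; rw [hcl]; simp
    refine ⟨fun I => ((univ.filter (fun i : Fin k => cl i = I)).card : ℝ) / b', ⟨?_, ?_, ?_⟩, ?_⟩
    · intro I; positivity
    · intro I hI
      have hemp : (univ.filter (fun i : Fin k => cl i = I)) = ∅ := by
        rw [Finset.eq_empty_iff_forall_notMem]
        intro i hi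
        rw [mem_filter] at hi
        simp only [IndepSet, not_forall] at hI
        obtain ⟨p, hp, hcon⟩ := hI
        rw [not_not] at hcon
        have h1 : i ∈ f p.1 := (hmemcl i p.1).mp (hi.2 ▸ hcon.1)
        have h2 : i ∈ f p.2 := (hmemcl i p.2).mp (hi.2 ▸ hcon.2)
        exact Finset.disjoint_left.mp (hdisj p hp) h1 h2
      simp only [hemp]
      simp
    · intro v
      have hfib : (f v).card
          = ∑ I ∈ univ.filter (fun I => v ∈ I), (univ.filter (fun i : Fin k => cl i = I)).card := by
        have h1 : (f v) = univ.filter (fun i : Fin k => i ∈ f v) := by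
          ext i; simp
        rw [h1]
        rw [Finset.card_eq_sum_card_fiberwise
          (f := cl) (t := univ.filter (fun I => v ∈ I))
          (fun i hi => by simp only [mem_coe, mem_filter, mem_univ, true_and] at hi ⊢
                          exact (hmemcl i v).mpr hi)]
        refine Finset.sum_congr rfl fun I hI => ?_
        congr 1
        ext i
        simp only [mem_filter, mem_univ, true_and, and_iff_right_iff_imp]
        intro hcli
        simp only [mem_filter, mem_univ, true_and] at hI
        exact (hmemcl i v).mp (hcli ▸ hI)
      beta_reduce
      rw [← Finset.sum_div]
      rw [← Nat.cast_sum, ← hfib, hcard v]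
      rw [div_self (by positivity)]
    · have htot : (k : ℕ)
          = ∑ I : Finset V, (univ.filter (fun i : Fin k => cl i = I)).card := by
        have := Finset.card_eq_sum_card_fiberwise
          (f := cl) (s := (univ : Finset (Fin k))) (t := (univ : Finset (Finset V)))
          (fun i _ => mem_univ _)
        simpa using this
      beta_reduce
      rw [← Finset.sum_div, ← Nat.cast_sum, ← htot]
      exact hylt
  -- Step 2: a real optimal solution
  set K : Set (Finset V → ℝ) := {x | ((∀ I, 0 ≤ x I) ∧ (∀ I, ¬IndepSet D I → x I = 0) ∧
       (∀ v : V, 1 ≤ ∑ I ∈ univ.filter (fun I => v ∈ I), x I)) ∧ ∑ I, x I ≤ r + 1} with hK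
  have hKne : K.Nonempty := by
    obtain ⟨x, hx1, hx2⟩ := happrox 1 one_pos
    exact ⟨x, hx1, hx2.le⟩
  have hKsub : K ⊆ Set.Icc (0 : Finset V → ℝ) (fun _ => r + 1) := by
    rintro x ⟨⟨h0, _, _⟩, hsum⟩
    constructor
    · intro I; exact h0 I
    · intro I
      calc x I ≤ ∑ J, x J := Finset.single_le_sum (fun J _ => h0 J) (mem_univ I)
        _ ≤ r + 1 := hsum
  have hKclosed : IsClosed K := by
    have h1 : IsClosed {x : Finset V → ℝ | ∀ I, 0 ≤ x I} := by
      rw [Set.setOf_forall]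
      exact isClosed_iInter fun I => isClosed_le continuous_const (continuous_apply I)
    have h2 : IsClosed {x : Finset V → ℝ | ∀ I, ¬IndepSet D I → x I = 0} := by
      rw [Set.setOf_forall]
      refine isClosed_iInter fun I => ?_
      by_cases hI : IndepSet D I
      · simp [hI]
      · simp only [hI, not_false_iff, true_implies]
        exact isClosed_eq (continuous_apply I) continuous_const
    have h3 : IsClosed {x : Finset V → ℝ | ∀ v : V, 1 ≤ ∑ I ∈ univ.filter (fun I => v ∈ I), x I} := by
      rw [Set.setOf_forall]
      exact isClosed_iInter fun v => isClosed_le continuous_const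
        (continuous_finset_sum _ fun I _ => continuous_apply I)
    have h4 : IsClosed {x : Finset V → ℝ | ∑ I, x I ≤ r + 1} :=
      isClosed_le (continuous_finset_sum _ fun I _ => continuous_apply I) continuous_const
    have hKeq : K = ({x : Finset V → ℝ | ∀ I, 0 ≤ x I} ∩ {x | ∀ I, ¬IndepSet D I → x I = 0}
        ∩ {x | ∀ v : V, 1 ≤ ∑ I ∈ univ.filter (fun I => v ∈ I), x I}) ∩ {x | ∑ I, x I ≤ r + 1} := by
      ext x
      rw [hK]
      simp only [Set.mem_inter_iff, Set.mem_setOf_eq]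
      tauto
    rw [hKeq]
    exact ((h1.inter h2).inter h3).inter h4
  have hKcompact : IsCompact K :=
    (isCompact_Icc).of_isClosed_subset hKclosed hKsub
  obtain ⟨xs, hxsK, hxsmin⟩ := hKcompact.exists_isMinOn hKne
    ((continuous_finset_sum _ fun I _ => continuous_apply I)).continuousOn
  have hxst : ∑ I, xs I ≤ r := by
    by_contra hgt
    push_neg at hgt
    set ε : ℝ := min (∑ I, xs I - r) 1 with hε
    have hεpos : 0 < ε := lt_min (by linarith) one_pos
    obtain ⟨y, hy1, hy2⟩ := happrox ε hεpos
    have hyK : y ∈ K := ⟨hy1, by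
      have h5 : ε ≤ 1 := min_le_right _ _
      linarith⟩
    have h6 := isMinOn_iff.mp hxsmin y hyK
    have hεle : ε ≤ ∑ I, xs I - r := min_le_left _ _
    linarith
  -- Step 3: rational solution
  obtain ⟨⟨hxs0, hxsz, hxscov⟩, _⟩ := hxsK
  have hcast : (((a : ℚ) / (b : ℚ) : ℚ) : ℝ) = r := by rw [hr]; push_cast; ring
  have hsolv : ∃ qq : Finset V → ℚ, (∀ I, 0 ≤ qq I) ∧ (∀ I, ¬IndepSet D I → qq I = 0) ∧
      (∀ v : V, 1 ≤ ∑ I ∈ univ.filter (fun I => v ∈ I), qq I) ∧ ∑ I, qq I ≤ (a : ℚ) / b := by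
    set cc : (Finset V ⊕ Finset V) ⊕ (V ⊕ Unit) → Finset V → ℚ :=
      Sum.elim
        (Sum.elim (fun I J => if J = I then 1 else 0)
          (fun I J => if ¬IndepSet D I ∧ J = I then -1 else 0))
        (Sum.elim (fun v J => if v ∈ J then 1 else 0) (fun _ _ => -1)) with hcc
    set dd : (Finset V ⊕ Finset V) ⊕ (V ⊕ Unit) → ℚ :=
      Sum.elim (fun _ => 0) (Sum.elim (fun _ => 1) (fun _ => -((a : ℚ) / b))) with hdd
    have hfeas : ∃ x : Finset V → ℝ, ∀ i, (dd i : ℝ) ≤ ∑ J, (cc i J : ℝ) * x J := by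
      refine ⟨xs, ?_⟩
      rintro ((I | I) | (v | u))
      · simp only [hcc, hdd, Sum.elim_inl, Rat.cast_zero,
          apply_ite (fun q : ℚ => (q : ℝ)), Rat.cast_one]
        rw [sum_ite_eq_mul, one_mul]
        exact hxs0 I
      · simp only [hcc, hdd, Sum.elim_inl, Sum.elim_inr, Rat.cast_zero,
          apply_ite (fun q : ℚ => (q : ℝ)), Rat.cast_neg, Rat.cast_one]
        by_cases hI : IndepSet D I
        · simp [hI]
        · simp only [hI, not_false_eq_true, true_and]
          rw [sum_ite_eq_mul, hxsz I hI]
          norm_num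
      · simp only [hcc, hdd, Sum.elim_inr, Sum.elim_inl, Rat.cast_one,
          apply_ite (fun q : ℚ => (q : ℝ)), Rat.cast_zero]
        rw [show ∑ J, (if v ∈ J then (1:ℝ) else 0) * xs J
            = ∑ J ∈ univ.filter (fun J => v ∈ J), xs J by
          rw [Finset.sum_filter]
          exact Finset.sum_congr rfl fun J _ => by split_ifs <;> simp]
        exact hxscov v
      · simp only [hcc, hdd, Sum.elim_inr, Rat.cast_neg, Rat.cast_one, neg_mul, one_mul]
        rw [Finset.sum_neg_distrib, hcast]
        exact neg_le_neg hxst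
    obtain ⟨qq, hqq⟩ := ratSolution cc dd hfeas
    refine ⟨qq, ?_, ?_, ?_, ?_⟩
    · intro I
      have h2 := hqq (Sum.inl (Sum.inl I))
      simp only [hcc, hdd, Sum.elim_inl] at h2
      rwa [sum_ite_eq_mul, one_mul] at h2
    · intro I hI
      have h1 := hqq (Sum.inl (Sum.inr I))
      simp only [hcc, hdd, Sum.elim_inl, Sum.elim_inr, hI, not_false_eq_true, true_and] at h1
      rw [sum_ite_eq_mul] at h1
      have h2 := hqq (Sum.inl (Sum.inl I))
      simp only [hcc, hdd, Sum.elim_inl] at h2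
      rw [sum_ite_eq_mul, one_mul] at h2
      linarith
    · intro v
      have h1 := hqq (Sum.inr (Sum.inl v))
      simp only [hcc, hdd, Sum.elim_inr, Sum.elim_inl] at h1
      rw [show ∑ J, (if v ∈ J then (1:ℚ) else 0) * qq J
          = ∑ J ∈ univ.filter (fun J => v ∈ J), qq J by
        rw [Finset.sum_filter]
        exact Finset.sum_congr rfl fun J _ => by split_ifs <;> simp] at h1
      exact h1
    · have h1 := hqq (Sum.inr (Sum.inr ()))
      simp only [hcc, hdd, Sum.elim_inr, neg_mul, one_mul] at h1
      rw [Finset.sum_neg_distrib] at h1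
      linarith
  -- Step 4: integerize and build the coloring
  obtain ⟨qq, hq0, hqz, hqcov, hqtot⟩ := hsolv
  set L : ℕ := ∏ I : Finset V, (qq I).den with hL
  have hLpos : 0 < L := Finset.prod_pos fun I _ => (qq I).pos
  have hLdvd : ∀ I : Finset V, ((qq I).den : ℕ) ∣ L := fun I =>
    Finset.dvd_prod_of_mem _ (mem_univ I)
  have hint : ∀ I : Finset V, ∃ m : ℕ, (m : ℚ) = (L : ℚ) * qq I := by
    intro I
    obtain ⟨t, ht⟩ := hLdvd I
    have hnum : (0:ℤ) ≤ (qq I).num := Rat.num_nonneg.mpr (hq0 I)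
    refine ⟨t * (qq I).num.toNat, ?_⟩
    have hkey : ((qq I).den : ℚ) * qq I = ((qq I).num : ℚ) := by
      rw [mul_comm]
      exact Rat.mul_den_eq_num _
    have htn : ((qq I).num.toNat : ℚ) = ((qq I).num : ℚ) := by
      exact_mod_cast congrArg (fun z : ℤ => (z : ℚ)) (Int.toNat_of_nonneg hnum)
    have hl : ((t * (qq I).num.toNat : ℕ) : ℚ) = (t : ℚ) * ((qq I).num : ℚ) := by
      push_cast
      rw [htn]
    rw [hl, ht]
    push_cast
    rw [show ((qq I).den : ℚ) * (t:ℚ) * qq I = (t:ℚ) * (((qq I).den : ℚ) * qq I) from by ring,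
      hkey]
  choose m hm using hint
  set M : Finset V → ℕ := fun I => b * m I with hM
  have hMcast : ∀ I, ((M I : ℕ) : ℚ) = (b:ℚ) * ((L:ℚ) * qq I) := by
    intro I
    rw [hM]
    push_cast
    rw [hm I]
  have hcov : ∀ v : V, b * L ≤ ∑ I ∈ univ.filter (fun I => v ∈ I), M I := by
    intro v
    have h2 : (∑ I ∈ univ.filter (fun I => v ∈ I), (M I : ℚ))
        = (b:ℚ)*(L:ℚ) * ∑ I ∈ univ.filter (fun I => v ∈ I), qq I := by
      rw [Finset.mul_sum]
      exact Finset.sum_congr rfl fun I _ => by rw [hMcast I]; ring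
    have h3 : (b:ℚ)*(L:ℚ)*1 ≤ (b:ℚ)*(L:ℚ) * ∑ I ∈ univ.filter (fun I => v ∈ I), qq I :=
      mul_le_mul_of_nonneg_left (hqcov v) (by positivity)
    have h5 : ((b*L : ℕ):ℚ) ≤ ((∑ I ∈ univ.filter (fun I => v ∈ I), M I : ℕ):ℚ) := by
      push_cast
      rw [h2]
      push_cast at h3
      linarith
    exact_mod_cast h5
  have htot : ∑ I : Finset V, M I ≤ a * L := by
    have h2 : (∑ I : Finset V, (M I : ℚ)) = (b:ℚ) * (L:ℚ) * ∑ I, qq I := by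
      rw [Finset.mul_sum]
      exact Finset.sum_congr rfl fun I _ => by rw [hMcast I]; ring
    have h3 : (b:ℚ) * (L:ℚ) * ∑ I, qq I ≤ (b:ℚ)*(L:ℚ)*((a:ℚ)/b) :=
      mul_le_mul_of_nonneg_left hqtot (by positivity)
    have h4 : (b:ℚ)*(L:ℚ)*((a:ℚ)/b) = (a:ℚ)*(L:ℚ) := by
      field_simp
    have h5 : ((∑ I : Finset V, M I : ℕ) : ℚ) ≤ ((a * L : ℕ) : ℚ) := by
      push_cast
      rw [h2, ← h4]
      exact h3
    exact_mod_cast h5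
  have hcardσ : Fintype.card ((I : Finset V) × Fin (M I)) ≤ Fintype.card (Fin (a*L)) := by
    rw [Fintype.card_sigma, Fintype.card_fin]
    simpa using htot
  obtain ⟨e⟩ := Function.Embedding.nonempty_of_card_le hcardσ
  set g0 : V → Finset (Fin (a*L)) :=
    fun v => (univ.filter (fun p : (I : Finset V) × Fin (M I) => v ∈ p.1)).image e with hg0
  have hg0card : ∀ v, (g0 v).card = ∑ I ∈ univ.filter (fun I => v ∈ I), M I := by
    intro v
    rw [hg0]
    beta_reduce
    rw [Finset.card_image_of_injective _ e.injective]
    have hsig : (univ.filter (fun p : (I : Finset V) × Fin (M I) => v ∈ p.1))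
        = (univ.filter (fun I => v ∈ I)).sigma (fun I => (univ : Finset (Fin (M I)))) := by
      ext ⟨I, j⟩
      simp [Finset.mem_sigma]
    rw [hsig, Finset.card_sigma]
    simp
  have hg0ge : ∀ v, b * L ≤ (g0 v).card := fun v => (hg0card v).symm ▸ hcov v
  have hg0disj : ∀ p ∈ D, Disjoint (g0 p.1) (g0 p.2) := by
    intro p hp
    rw [Finset.disjoint_left]
    intro col h1 h2
    simp only [hg0, Finset.mem_image, Finset.mem_filter, Finset.mem_univ, true_and] at h1 h2
    obtain ⟨p1, hp1, he1⟩ := h1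
    obtain ⟨p2, hp2, he2⟩ := h2
    have hpp : p1 = p2 := e.injective (he1.trans he2.symm)
    subst hpp
    have hMpos : 0 < M p1.1 := p1.2.pos
    have hqpos : qq p1.1 ≠ 0 := by
      intro h0
      have hm0 : (m p1.1 : ℚ) = 0 := by rw [hm p1.1, h0, mul_zero]
      have : m p1.1 = 0 := Nat.cast_eq_zero.mp hm0
      simp only [hM] at hMpos
      rw [this, mul_zero] at hMpos
      exact lt_irrefl 0 hMpos
    have hIndep : IndepSet D p1.1 := by
      by_contra hcon
      exact hqpos (hqz _ hcon)
    exact hIndep p hp ⟨hp1, hp2⟩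
  have hsub : ∀ v, ∃ t ⊆ g0 v, t.card = b * L :=
    fun v => Finset.exists_subset_card_eq (hg0ge v)
  choose g hgsub hgcard using hsub
  exact ⟨L, hLpos, g, hgcard, fun p hp => (hg0disj p hp).mono (hgsub p.1) (hgsub p.2)⟩

theorem stmt3 {V : Type*} [Fintype V] (G : OGraph V) (a b : ℕ) (hb : 0 < b) :
    fracChrom G ≤ (a : ℝ) / b ↔
      ∃ c : ℕ, 0 < c ∧
        ∃ (K : ConsistentSubOrientation (a * c) (b * c)) (g : V → KneserVert (a * c) (b * c)),
          ∀ u v, G.adj u v → K.adj (g u) (g v) := by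
  classical
  constructor
  · intro h
    have h' : sInf {x : ℝ | ∃ (b' k : ℕ) (f : V → Finset (Fin k)),
        0 < b' ∧ IsFoldColoring G b' k f ∧ x = (k : ℝ) / b'} ≤ (a : ℝ) / b := h
    set Sset : Set ℝ := {x : ℝ | ∃ (b' k : ℕ) (f : V → Finset (Fin k)),
        0 < b' ∧ IsFoldColoring G b' k f ∧ x = (k : ℝ) / b'} with hSset
    have hSne : Sset.Nonempty := by
      refine ⟨(Fintype.card V : ℝ) / ((1:ℕ) : ℝ), 1, Fintype.card V,
        fun v => {Fintype.equivFin V v}, one_pos, ⟨?_, ?_, ?_⟩, rfl⟩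
      · intro v; simp
      · intro u v huv
        rw [Finset.disjoint_singleton]
        intro hcon
        have h1 := (Fintype.equivFin V).injective hcon
        rw [h1] at huv
        exact G.irrefl v huv
      · intro x y z w hxy hzw hnd
        rw [Finset.disjoint_singleton] at hnd ⊢
        have hxw : x = w := (Fintype.equivFin V).injective (not_not.mp hnd)
        intro hcon
        have hyz : y = z := (Fintype.equivFin V).injective hcon
        subst hxw
        subst hyz
        exact G.asymm _ _ hxy hzw
    set Valid : Finset (V × V) → Prop := fun Df =>
      (∀ u v, G.adj u v → (u, v) ∈ Df) ∧
      (∀ x y z w, G.adj x y → G.adj z w → (x, w) ∈ Df ∨ (y, z) ∈ Df) with hValid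
    set F : Finset (Finset (V × V)) :=
      Finset.univ.filter (fun Df => Valid Df ∧ (coverSet Df).Nonempty) with hF
    have hbddc : ∀ Df : Finset (V × V), BddBelow (coverSet Df) := by
      intro Df
      refine ⟨0, ?_⟩
      rintro y ⟨b', k, f, hb', _, _, rfl⟩
      positivity
    have hcover : ∀ y ∈ Sset, ∃ Df ∈ F, y ∈ coverSet Df := by
      rintro y ⟨b', k, f, hb', ⟨hcard, hadj, hcons⟩, rfl⟩
      set Df : Finset (V × V) := Finset.univ.filter (fun p => Disjoint (f p.1) (f p.2)) with hDf
      have hmemDf : ∀ p : V × V, p ∈ Df ↔ Disjoint (f p.1) (f p.2) := by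
        intro p; rw [hDf]; simp
      have hvalid : Valid Df := by
        constructor
        · intro u v huv; exact (hmemDf (u,v)).mpr (hadj u v huv)
        · intro x y z w hxy hzw
          by_cases hd : Disjoint (f x) (f w)
          · exact Or.inl ((hmemDf (x,w)).mpr hd)
          · exact Or.inr ((hmemDf (y,z)).mpr (hcons x y z w hxy hzw hd))
      have hyc : (k:ℝ)/b' ∈ coverSet Df :=
        ⟨b', k, f, hb', hcard, fun p hp => (hmemDf p).mp hp, rfl⟩
      refine ⟨Df, ?_, hyc⟩
      rw [hF]
      exact Finset.mem_filter.mpr ⟨Finset.mem_univ _, hvalid, ⟨_, hyc⟩⟩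
    have hFne : F.Nonempty := by
      obtain ⟨y, hy⟩ := hSne
      obtain ⟨Df, hDf, _⟩ := hcover y hy
      exact ⟨Df, hDf⟩
    set γ : ℝ := (F.image (fun Df => sInf (coverSet Df))).min' (hFne.image _) with hγ
    have hγle : γ ≤ (a:ℝ)/b := by
      refine le_trans (le_csInf hSne ?_) h'
      intro y hy
      obtain ⟨Df, hDfF, hyc⟩ := hcover y hy
      calc γ ≤ sInf (coverSet Df) := Finset.min'_le _ _ (Finset.mem_image_of_mem _ hDfF)
        _ ≤ y := csInf_le (hbddc Df) hyc
    have hγmem := Finset.min'_mem (F.image (fun Df => sInf (coverSet Df))) (hFne.image _)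
    rw [Finset.mem_image] at hγmem
    obtain ⟨Df, hDfF, hDfγ⟩ := hγmem
    rw [hF, Finset.mem_filter] at hDfF
    obtain ⟨-, hvalid, hcne⟩ := hDfF
    have hinfD : sInf (coverSet Df) ≤ (a:ℝ)/b := by rw [hDfγ]; exact hγle
    obtain ⟨c, hc, g, hgcard, hgdisj⟩ := keyLemma Df a b hb hcne hinfD
    refine ⟨c, hc, ?_⟩
    set gv : V → KneserVert (a*c) (b*c) := fun v => ⟨g v, hgcard v⟩ with hgv
    refine ⟨⟨fun x y => ∃ u v, G.adj u v ∧ gv u = x ∧ gv v = y, ?_, ?_⟩, gv,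
      fun u v huv => ⟨u, v, huv, rfl, rfl⟩⟩
    · rintro x y ⟨u, v, huv, rfl, rfl⟩
      exact hgdisj (u, v) (hvalid.1 u v huv)
    · rintro x y w z ⟨u1, v1, h1, rfl, rfl⟩ ⟨u2, v2, h2, rfl, rfl⟩ hnd
      rcases hvalid.2 u1 v1 u2 v2 h1 h2 with hD | hD
      · exact absurd (hgdisj (u1, v2) hD) hnd
      · exact hgdisj (v1, u2) hD
  · rintro ⟨c, hc, K, g, hg⟩
    have hmem : ((a*c : ℕ):ℝ)/((b*c : ℕ):ℝ) ∈ {x : ℝ | ∃ (b' k : ℕ) (f : V → Finset (Fin k)),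
        0 < b' ∧ IsFoldColoring G b' k f ∧ x = (k : ℝ) / b'} := by
      refine ⟨b*c, a*c, fun v => (g v).val, Nat.mul_pos hb hc, ⟨fun v => (g v).2, ?_, ?_⟩, rfl⟩
      · intro u v huv
        exact K.sub _ _ (hg u v huv)
      · intro x y z w hxy hzw hnd
        exact K.consistent (g x) (g y) (g z) (g w) (hg _ _ hxy) (hg _ _ hzw) hnd
    have hbdd : BddBelow {x : ℝ | ∃ (b' k : ℕ) (f : V → Finset (Fin k)),
        0 < b' ∧ IsFoldColoring G b' k f ∧ x = (k : ℝ) / b'} := by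
      refine ⟨0, ?_⟩
      rintro y ⟨b', k, f, hb', _, rfl⟩
      positivity
    have hle : fracChrom G ≤ ((a*c : ℕ):ℝ)/((b*c : ℕ):ℝ) := csInf_le hbdd hmem
    have hceq : ((a*c : ℕ):ℝ)/((b*c : ℕ):ℝ) = (a:ℝ)/b := by
      have hc0 : (c:ℝ) ≠ 0 := Nat.cast_ne_zero.mpr hc.ne'
      have hb0 : (b:ℝ) ≠ 0 := Nat.cast_ne_zero.mpr hb.ne'
      push_cast
      field_simp
    rwa [hceq] at hle
end

section
/- A vertex subset R of an oriented graph G is an oriented relative clique (i.e., all vertices of R receive pairwise distinct images under every homomorphism of G) if and only if every pair of distinct non-adjacent vertices in R is connected by a directed path of length 2. -/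
/-!
A homomorphism separates adjacent vertices because the target has no loops, and vertices
joined by a directed 2-path because it has no 2-cycles. Conversely, if `x` and `y` are neither,
identifying `y` with `x` creates no loop and no 2-cycle, so the image of `G` under this
identification is an oriented graph onto which `G` maps with `x` and `y` merged.
-/

namespace OGraph

variable {V W : Type*} {G : OGraph V}

theorem Hom.apply_ne_of_adj {H : OGraph W} {f : V → W} (hf : G.Hom H f) {x y : V}
    (h : G.adj x y) : f x ≠ f y :=
  fun heq => H.irrefl (f x) (heq ▸ hf x y h)

theorem Hom.apply_ne_of_adj_adj {H : OGraph W} {f : V → W} (hf : G.Hom H f) {x y z : V}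
    (hxz : G.adj x z) (hzy : G.adj z y) : f x ≠ f y :=
  fun heq => H.asymm _ _ (hf x z hxz) (heq ▸ hf z y hzy)

variable (G)

def map (f : V → W) (hloop : ∀ u v, G.adj u v → f u ≠ f v)
    (hcycle : ∀ u v u' v', G.adj u v → G.adj u' v' → f v = f u' → f v' ≠ f u) : OGraph W where
  adj a b := ∃ u v, G.adj u v ∧ f u = a ∧ f v = b
  irrefl := by
    rintro _ ⟨u, v, huv, rfl, hv⟩
    exact hloop u v huv hv.symm
  asymm := by
    rintro _ _ ⟨u, v, huv, rfl, rfl⟩ ⟨u', v', hu'v', hu', hv'⟩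
    exact hcycle u v u' v' huv hu'v' hu'.symm hv'

theorem hom_map (f : V → W) (hloop : ∀ u v, G.adj u v → f u ≠ f v)
    (hcycle : ∀ u v u' v', G.adj u v → G.adj u' v' → f v = f u' → f v' ≠ f u) :
    G.Hom (G.map f hloop hcycle) f :=
  fun u v h => ⟨u, v, h, rfl, rfl⟩

theorem update_id_eq_update_id [DecidableEq V] {x y a b : V}
    (h : Function.update id y x a = Function.update id y x b) :
    a = b ∨ (a = x ∧ b = y) ∨ (a = y ∧ b = x) := by
  by_cases ha : a = y <;> by_cases hb : b = y <;> simp_all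

theorem exists_hom_apply_eq_apply {x y : V} (hxy : ¬ G.adj x y) (hyx : ¬ G.adj y x)
    (hpath : ¬ ∃ z, (G.adj x z ∧ G.adj z y) ∨ (G.adj y z ∧ G.adj z x)) :
    ∃ (H : OGraph V) (f : V → V), G.Hom H f ∧ f x = f y := by
  classical
  set f := Function.update id y x
  have hloop : ∀ u v, G.adj u v → f u ≠ f v := by
    intro u v huv heq
    rcases update_id_eq_update_id heq with rfl | ⟨rfl, rfl⟩ | ⟨rfl, rfl⟩
    exacts [G.irrefl u huv, hxy huv, hyx huv]
  have hcycle : ∀ u v u' v', G.adj u v → G.adj u' v' → f v = f u' → f v' ≠ f u := by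
    intro u v u' v' huv hu'v' hvu' hv'u
    rcases update_id_eq_update_id hvu' with rfl | ⟨rfl, rfl⟩ | ⟨rfl, rfl⟩ <;>
      rcases update_id_eq_update_id hv'u with rfl | ⟨rfl, rfl⟩ | ⟨rfl, rfl⟩
    -- each case is a loop, a 2-cycle, an arc between `x` and `y` or a 2-path joining them
    all_goals grind [G.irrefl, G.asymm]
  exact ⟨G.map f hloop hcycle, f, G.hom_map f hloop hcycle, by simp [f, Function.update_apply]⟩

end OGraph

theorem stmt4 {V : Type} (G : OGraph V) (R : Set V) :
    (∀ (W : Type) (H : OGraph W) (f : V → W), G.Hom H f →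
        ∀ x ∈ R, ∀ y ∈ R, x ≠ y → f x ≠ f y) ↔
      (∀ x ∈ R, ∀ y ∈ R, x ≠ y → ¬ (G.adj x y ∨ G.adj y x) →
        ∃ z, (G.adj x z ∧ G.adj z y) ∨ (G.adj y z ∧ G.adj z x)) := by
  constructor
  · intro hsep x hx y hy hne hnadj
    by_contra hpath
    obtain ⟨H, f, hf, heq⟩ :=
      G.exists_hom_apply_eq_apply (fun h => hnadj (.inl h)) (fun h => hnadj (.inr h)) hpath
    exact hsep V H f hf x hx y hy hne heq
  · intro hpath W H f hf x hx y hy hne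
    by_cases hadj : G.adj x y ∨ G.adj y x
    · rcases hadj with h | h
      exacts [hf.apply_ne_of_adj h, (hf.apply_ne_of_adj h).symm]
    · obtain ⟨z, ⟨hxz, hzy⟩ | ⟨hyz, hzx⟩⟩ := hpath x hx y hy hne hadj
      exacts [hf.apply_ne_of_adj_adj hxz hzy, (hf.apply_ne_of_adj_adj hyz hzx).symm]
end

section
/- For any oriented graph G, the oriented relative clique number is at most the fractional oriented chromatic number, which is at most the oriented chromatic number: ω_ro(G) ≤ χ_o^*(G) ≤ χ_o(G). -/
/-- The oriented relative clique number: the maximum size of a set of vertices any two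
distinct members of which are adjacent or connected by a directed 2-path. -/
noncomputable def relCliqueNum {V : Type*} [Fintype V] (G : OGraph V) : ℕ :=
  sSup {n | ∃ R : Finset V, R.card = n ∧ ∀ x ∈ R, ∀ y ∈ R, x ≠ y →
    G.adj x y ∨ G.adj y x ∨ ∃ z, (G.adj x z ∧ G.adj z y) ∨ (G.adj y z ∧ G.adj z x)}

/-! A `b`-fold oriented colouring gives pairwise disjoint colour sets to the vertices of a
relative clique: adjacent vertices get disjoint sets by definition, and if `x → z → y` then
`f x ∩ f y ≠ ∅` would force `f z ∩ f z = ∅`, impossible for `b > 0`. Hence a relative clique `R`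
needs `|R| b ≤ k`, i.e. `ω_ro ≤ k / b`. A `1`-fold colouring is a `b`-fold one with `b = 1`,
which gives the second inequality. -/

namespace OGraph

variable {V : Type*} (G : OGraph V)

def IsRelClique (R : Finset V) : Prop :=
  ∀ x ∈ R, ∀ y ∈ R, x ≠ y →
    G.adj x y ∨ G.adj y x ∨ ∃ z, (G.adj x z ∧ G.adj z y) ∨ (G.adj y z ∧ G.adj z x)

lemma exists_isRelClique_card_eq_relCliqueNum [Fintype V] :
    ∃ R : Finset V, R.card = relCliqueNum G ∧ G.IsRelClique R := by
  refine Nat.sSup_mem (s := {n | ∃ R : Finset V, R.card = n ∧ G.IsRelClique R})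
    ⟨0, ∅, rfl, by simp [IsRelClique]⟩ ⟨Fintype.card V, ?_⟩
  rintro n ⟨R, rfl, -⟩
  exact R.card_le_univ

end OGraph

namespace IsFoldColoring

variable {V : Type*} {G : OGraph V} {b k : ℕ} {f : V → Finset (Fin k)}

lemma nonempty (hf : IsFoldColoring G b k f) (hb : 0 < b) (v : V) : (f v).Nonempty := by
  rw [← Finset.card_pos, hf.1 v]
  exact hb

lemma disjoint_of_adj_of_adj (hf : IsFoldColoring G b k f) (hb : 0 < b) {x y z : V}
    (hxz : G.adj x z) (hzy : G.adj z y) : Disjoint (f x) (f y) := by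
  by_contra h
  exact (hf.nonempty hb z).ne_empty (disjoint_self.mp (hf.2.2 x z z y hxz hzy h))

lemma pairwiseDisjoint_of_isRelClique (hf : IsFoldColoring G b k f) (hb : 0 < b)
    {R : Finset V} (hR : G.IsRelClique R) : (R : Set V).PairwiseDisjoint f := by
  intro x hx y hy hxy
  rcases hR x hx y hy hxy with h | h | ⟨z, ⟨hxz, hzy⟩ | ⟨hyz, hzx⟩⟩
  · exact hf.2.1 x y h
  · exact (hf.2.1 y x h).symm
  · exact hf.disjoint_of_adj_of_adj hb hxz hzy
  · exact (hf.disjoint_of_adj_of_adj hb hyz hzx).symm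

lemma card_mul_le_of_isRelClique (hf : IsFoldColoring G b k f) (hb : 0 < b)
    {R : Finset V} (hR : G.IsRelClique R) : R.card * b ≤ k := by
  classical
  calc R.card * b = ∑ x ∈ R, (f x).card := by simp [hf.1]
    _ = (R.biUnion f).card := (Finset.card_biUnion (hf.pairwiseDisjoint_of_isRelClique hb hR)).symm
    _ ≤ k := (Finset.card_le_univ _).trans_eq (Fintype.card_fin k)

end IsFoldColoring

section Chromatic

variable {V : Type*} (G : OGraph V)

lemma isFoldColoring_singleton {k : ℕ} {e : V → Fin k} (he : Function.Injective e) :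
    IsFoldColoring G 1 k fun v => {e v} := by
  refine ⟨fun v => rfl, fun u v huv => ?_, fun x y z w hxy hzw hxw => ?_⟩
  · simp only [Finset.disjoint_singleton, ne_eq, he.eq_iff]
    rintro rfl
    exact G.irrefl u huv
  · simp only [Finset.disjoint_singleton, ne_eq, he.eq_iff, not_not] at hxw ⊢
    rintro rfl
    exact G.asymm x y hxy (hxw ▸ hzw)

lemma exists_isFoldColoring_one_card [Fintype V] :
    ∃ f : V → Finset (Fin (Fintype.card V)), IsFoldColoring G 1 (Fintype.card V) f :=
  ⟨_, isFoldColoring_singleton G (Fintype.equivFin V).injective⟩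

lemma exists_isFoldColoring_foldChrom {b k : ℕ} {f : V → Finset (Fin k)}
    (hf : IsFoldColoring G b k f) : ∃ g : V → Finset (Fin (foldChrom G b)),
      IsFoldColoring G b (foldChrom G b) g :=
  Nat.sInf_mem (s := {k | ∃ f : V → Finset (Fin k), IsFoldColoring G b k f}) ⟨k, f, hf⟩

lemma fracChrom_le {b k : ℕ} {f : V → Finset (Fin k)} (hb : 0 < b)
    (hf : IsFoldColoring G b k f) : fracChrom G ≤ k / b := by
  refine csInf_le ⟨0, ?_⟩ ⟨b, k, f, hb, hf, rfl⟩
  rintro x ⟨b, k, f, -, -, rfl⟩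
  positivity

lemma le_fracChrom [Fintype V] {r : ℝ}
    (h : ∀ (b k : ℕ) (f : V → Finset (Fin k)), 0 < b → IsFoldColoring G b k f → r ≤ k / b) :
    r ≤ fracChrom G := by
  obtain ⟨f, hf⟩ := exists_isFoldColoring_one_card G
  refine le_csInf ⟨_, 1, _, f, one_pos, hf, rfl⟩ ?_
  rintro x ⟨b, k, f, hb, hf, rfl⟩
  exact h b k f hb hf

end Chromatic

theorem stmt5 {V : Type*} [Fintype V] (G : OGraph V) :
    (relCliqueNum G : ℝ) ≤ fracChrom G ∧ fracChrom G ≤ (foldChrom G 1 : ℝ) := by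
  constructor
  · obtain ⟨R, hRcard, hR⟩ := G.exists_isRelClique_card_eq_relCliqueNum
    refine le_fracChrom G fun b k f hb hf => ?_
    rw [le_div_iff₀ (by exact_mod_cast hb), ← hRcard]
    exact_mod_cast hf.card_mul_le_of_isRelClique hb hR
  · obtain ⟨f, hf⟩ := exists_isFoldColoring_one_card G
    obtain ⟨g, hg⟩ := exists_isFoldColoring_foldChrom G hf
    simpa using fracChrom_le G one_pos hg
end

section
/- A vertex subset I of an oriented graph G is an oriented independent set (i.e., for each pair of distinct vertices x, y ∈ I there exists an oriented coloring identifying x and y) if and only if no two distinct vertices of I are adjacent or connected by a directed 2-path. -/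
theorem Function.eq_or_eq_and_eq_of_update_id_eq {V : Type*} [DecidableEq V] {x y u v : V}
    (h : Function.update id y x u = Function.update id y x v) :
    u = v ∨ (u = x ∧ v = y) ∨ (u = y ∧ v = x) := by
  simp only [Function.update_apply, id] at h
  split_ifs at h <;> simp_all

namespace OGraph

variable {V W : Type*}

theorem Hom.not_adj_of_map_eq {G : OGraph V} {H : OGraph W} {f : V → W} (hf : G.Hom H f)
    {x y : V} (h : f x = f y) : ¬ G.adj x y := fun hxy =>
  H.irrefl (f y) (h ▸ hf x y hxy)

theorem Hom.not_adj_adj_of_map_eq {G : OGraph V} {H : OGraph W} {f : V → W} (hf : G.Hom H f)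
    {x y z : V} (h : f x = f y) : ¬ (G.adj x z ∧ G.adj z y) := fun ⟨hxz, hzy⟩ =>
  H.asymm _ _ (h ▸ hf x z hxz) (hf z y hzy)

def image (G : OGraph V) (f : V → W) (hloop : ∀ u v, G.adj u v → f u ≠ f v)
    (hdigon : ∀ u v u' v', G.adj u v → G.adj u' v' → f v = f u' → f u ≠ f v') : OGraph W where
  adj a b := ∃ u v, G.adj u v ∧ f u = a ∧ f v = b
  irrefl := by
    rintro _ ⟨u, v, huv, rfl, hv⟩
    exact hloop u v huv hv.symm
  asymm := by
    rintro _ _ ⟨u, v, huv, rfl, rfl⟩ ⟨u', v', huv', hu', hv'⟩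
    exact hdigon u v u' v' huv huv' hu'.symm hv'.symm

theorem hom_image (G : OGraph V) (f : V → W) (hloop : ∀ u v, G.adj u v → f u ≠ f v)
    (hdigon : ∀ u v u' v', G.adj u v → G.adj u' v' → f v = f u' → f u ≠ f v') :
    G.Hom (G.image f hloop hdigon) f :=
  fun u v huv => ⟨u, v, huv, rfl, rfl⟩

theorem exists_hom_map_eq_iff {V : Type} (G : OGraph V) (x y : V) :
    (∃ (W : Type) (H : OGraph W) (f : V → W), G.Hom H f ∧ f x = f y) ↔
      ¬ (G.adj x y ∨ G.adj y x) ∧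
        ¬ ∃ z, (G.adj x z ∧ G.adj z y) ∨ (G.adj y z ∧ G.adj z x) := by
  constructor
  · rintro ⟨W, H, f, hf, hfxy⟩
    refine ⟨not_or_intro (hf.not_adj_of_map_eq hfxy) (hf.not_adj_of_map_eq hfxy.symm), ?_⟩
    rintro ⟨z, hpath | hpath⟩
    exacts [hf.not_adj_adj_of_map_eq hfxy hpath, hf.not_adj_adj_of_map_eq hfxy.symm hpath]
  · rintro ⟨hadj, hpath⟩
    classical
    let f := Function.update id y x
    have hfxy : f x = f y := by by_cases h : x = y <;> simp [f, h]
    have hloop : ∀ u v, G.adj u v → f u ≠ f v := by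
      intro u v huv h
      rcases Function.eq_or_eq_and_eq_of_update_id_eq h with rfl | ⟨rfl, rfl⟩ | ⟨rfl, rfl⟩
      exacts [G.irrefl u huv, hadj (.inl huv), hadj (.inr huv)]
    -- each of the nine cases is a loop, a digon, an arc between `x` and `y`, or a 2-path
    -- between them
    have hdigon : ∀ u v u' v', G.adj u v → G.adj u' v' → f v = f u' → f u ≠ f v' := by
      intro u v u' v' huv huv' hvu' huv'_eq
      rcases Function.eq_or_eq_and_eq_of_update_id_eq hvu' with rfl | ⟨rfl, rfl⟩ | ⟨rfl, rfl⟩ <;>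
        rcases Function.eq_or_eq_and_eq_of_update_id_eq huv'_eq with rfl | ⟨rfl, rfl⟩ | ⟨rfl, rfl⟩
      all_goals first
        | exact G.irrefl _ ‹_›
        | exact G.asymm _ _ huv huv'
        | exact hadj (.inl ‹_›)
        | exact hadj (.inr ‹_›)
        | exact hpath ⟨_, .inl ⟨‹_›, ‹_›⟩⟩
        | exact hpath ⟨_, .inr ⟨‹_›, ‹_›⟩⟩
    exact ⟨V, G.image f hloop hdigon, f, G.hom_image f hloop hdigon, hfxy⟩

end OGraph

theorem stmt7 {V : Type} (G : OGraph V) (I : Set V) :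
    (∀ x ∈ I, ∀ y ∈ I, x ≠ y →
        ∃ (W : Type) (H : OGraph W) (f : V → W), G.Hom H f ∧ f x = f y) ↔
      (∀ x ∈ I, ∀ y ∈ I, x ≠ y →
        ¬ (G.adj x y ∨ G.adj y x) ∧
        ¬ ∃ z, (G.adj x z ∧ G.adj z y) ∨ (G.adj y z ∧ G.adj z x)) :=
  forall₂_congr fun x _ => forall₂_congr fun y _ =>
    imp_congr_right fun _ => G.exists_hom_map_eq_iff x y
end

section
/- Let r > 5 with r not divisible by 3, and suppose c is a b-fold oriented k-coloring of the directed cycle C_r with k < 4b, where c(u_0) = A, c(u_1) = B, c(u_2) = C. Then no three consecutive vertices u_i, u_{i+1}, u_{i+2} can all have color sets intersecting the same set X ∈ {A, B, C}, and no three consecutive vertices can all have color sets disjoint from the same set X ∈ {A, B, C}. -/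
/-- The directed cycle of length `r`. -/
def dirCycle (r : ℕ) (hr : 3 ≤ r) : OGraph (ZMod r) where
  adj u v := v = u + 1
  irrefl := by
    intro v hv
    haveI : NeZero r := ⟨by omega⟩
    have h1 : ((1 : ℕ) : ZMod r) = 0 := by
      have := left_eq_add.mp hv
      simpa using this
    rw [ZMod.natCast_eq_zero_iff] at h1
    have := Nat.le_of_dvd one_pos h1
    omega
  asymm := by
    intro u v h1 h2
    haveI : NeZero r := ⟨by omega⟩
    have : u = u + 1 + 1 := by rw [← h1]; exact h2
    have h2' : ((2 : ℕ) : ZMod r) = 0 := by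
      have := left_eq_add.mp (by rw [add_assoc] at this; exact this)
      push_cast
      simpa [one_add_one_eq_two] using this
    rw [ZMod.natCast_eq_zero_iff] at h2'
    have := Nat.le_of_dvd two_pos h2'
    omega

/-
On a directed path `u → v → w` the three color sets are pairwise disjoint: the oriented condition
for the arcs `uv`, `vw` separates `c u` from `c w`. Four pairwise disjoint `b`-sets need `4b ≤ k`
colors, so no `b`-set `c j` can avoid three consecutive color sets. If instead `c i`, `c (i+1)`,
`c (i+2)` all meet `c j`, the oriented condition for the arc `j → j+1` against the arcs ending at
`i`, `i+1`, `i+2` makes `c (j+1)` disjoint from `c (i-1)`, `c i`, `c (i+1)`: again four disjoint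
`b`-sets along a path.
-/

theorem Finset.card_add_card_add_card_add_card_le {α : Type*} [Fintype α]
    {s₁ s₂ s₃ s₄ : Finset α}
    (h₁₂ : Disjoint s₁ s₂) (h₁₃ : Disjoint s₁ s₃) (h₁₄ : Disjoint s₁ s₄)
    (h₂₃ : Disjoint s₂ s₃) (h₂₄ : Disjoint s₂ s₄) (h₃₄ : Disjoint s₃ s₄) :
    s₁.card + s₂.card + s₃.card + s₄.card ≤ Fintype.card α := by
  classical
  rw [← Finset.card_union_of_disjoint h₁₂,
    ← Finset.card_union_of_disjoint (Finset.disjoint_union_left.2 ⟨h₁₃, h₂₃⟩),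
    ← Finset.card_union_of_disjoint
      (Finset.disjoint_union_left.2 ⟨Finset.disjoint_union_left.2 ⟨h₁₄, h₂₄⟩, h₃₄⟩)]
  exact Finset.card_le_univ _

namespace IsFoldColoring

variable {V : Type*} {G : OGraph V} {b k : ℕ} {f : V → Finset (Fin k)}
  (hf : IsFoldColoring G b k f)
include hf

theorem card_eq (v : V) : (f v).card = b := hf.1 v

theorem disjoint_of_adj {u v : V} (huv : G.adj u v) : Disjoint (f u) (f v) := hf.2.1 u v huv

theorem disjoint_of_adj_of_adj_of_not_disjoint {x y z w : V} (hxy : G.adj x y) (hzw : G.adj z w)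
    (hxw : ¬ Disjoint (f x) (f w)) : Disjoint (f y) (f z) :=
  hf.2.2 x y z w hxy hzw hxw

theorem disjoint_of_adj_adj {u v w : V} (huv : G.adj u v) (hvw : G.adj v w) :
    Disjoint (f u) (f w) := by
  by_contra huw
  have hv : f v = ∅ := disjoint_self.1 (hf.disjoint_of_adj_of_adj_of_not_disjoint huv hvw huw)
  have hu : f u = ∅ := by
    rw [← Finset.card_eq_zero, hf.card_eq, ← hf.card_eq v, hv, Finset.card_empty]
  exact huw (hu ▸ Finset.disjoint_empty_left _)

theorem four_mul_le_of_adj_adj {u v w : V} (huv : G.adj u v) (hvw : G.adj v w)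
    {X : Finset (Fin k)} (hX : X.card = b)
    (hu : Disjoint (f u) X) (hv : Disjoint (f v) X) (hw : Disjoint (f w) X) : 4 * b ≤ k := by
  have := Finset.card_add_card_add_card_add_card_le (hf.disjoint_of_adj huv)
    (hf.disjoint_of_adj_adj huv hvw) hu (hf.disjoint_of_adj hvw) hv hw
  rw [hf.card_eq, hf.card_eq, hf.card_eq, hX, Fintype.card_fin] at this
  omega

end IsFoldColoring

section dirCycle

variable {r b k : ℕ} {hr : 3 ≤ r} {c : ZMod r → Finset (Fin k)}

theorem dirCycle_adj_add_one (u : ZMod r) : (dirCycle r hr).adj u (u + 1) := rfl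

theorem dirCycle_adj_sub_one (u : ZMod r) : (dirCycle r hr).adj (u - 1) u :=
  (sub_add_cancel u 1).symm

theorem dirCycle_adj_add_one_add_two (u : ZMod r) : (dirCycle r hr).adj (u + 1) (u + 2) := by
  show u + 2 = u + 1 + 1
  ring

theorem IsFoldColoring.disjoint_add_one_of_not_disjoint
    (hc : IsFoldColoring (dirCycle r hr) b k c) {a j : ZMod r}
    (h : ¬ Disjoint (c (a + 1)) (c j)) : Disjoint (c a) (c (j + 1)) :=
  (hc.disjoint_of_adj_of_adj_of_not_disjoint (dirCycle_adj_add_one j) (dirCycle_adj_add_one a)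
    fun hd => h hd.symm).symm

end dirCycle

theorem stmt13 (r b k : ℕ) (hr : 5 < r) (hk : k < 4 * b)
    (c : ZMod r → Finset (Fin k))
    (hc : IsFoldColoring (dirCycle r (by omega)) b k c) :
    ∀ i : ZMod r, ∀ X ∈ ({c 0, c 1, c 2} : Set (Finset (Fin k))),
      ¬ (¬ Disjoint (c i) X ∧ ¬ Disjoint (c (i + 1)) X ∧ ¬ Disjoint (c (i + 2)) X) ∧
      ¬ (Disjoint (c i) X ∧ Disjoint (c (i + 1)) X ∧ Disjoint (c (i + 2)) X) := by
  intro i X hX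
  obtain ⟨j, rfl⟩ : ∃ j, X = c j := by rcases hX with rfl | rfl | rfl <;> exact ⟨_, rfl⟩
  refine ⟨fun ⟨h₀, h₁, h₂⟩ => ?_, fun ⟨h₀, h₁, h₂⟩ => ?_⟩
  · have h₀' : ¬ Disjoint (c (i - 1 + 1)) (c j) := by rwa [sub_add_cancel]
    have h₂' : ¬ Disjoint (c (i + 1 + 1)) (c j) := by rwa [add_assoc, one_add_one_eq_two]
    exact hk.not_ge (hc.four_mul_le_of_adj_adj (dirCycle_adj_sub_one i) (dirCycle_adj_add_one i)
      (hc.card_eq (j + 1)) (hc.disjoint_add_one_of_not_disjoint h₀')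
      (hc.disjoint_add_one_of_not_disjoint h₁) (hc.disjoint_add_one_of_not_disjoint h₂'))
  · exact hk.not_ge (hc.four_mul_le_of_adj_adj (dirCycle_adj_add_one i)
      (dirCycle_adj_add_one_add_two i) (hc.card_eq j) h₀ h₁ h₂)
end

section
/- If a prime p with p ≡ 3 (mod 4) divides r, then the directed cycle C_r admits a k-fold oriented p-coloring where p = 4k − 1; consequently χ_o^*(C_r) ≤ 4 − 4/(p+1). -/
/-!
Colour the vertex `u` of the directed cycle `C_p`, `p = 4k - 1`, by the block of `k` consecutive
residues `k u, k u + 1, …, k u + k - 1` modulo `p`. Consecutive vertices receive consecutive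
blocks, so adjacent vertices get disjoint sets; and if `f x` meets `f w` while `f y` meets `f z`
for arcs `xy`, `zw`, subtracting the two congruences gives `j₁ + j₄ ≡ 2k + j₂ + j₃ (mod p)` with
`j_i < k`, impossible since `j₁ + j₄ < 2k ≤ 2k + j₂ + j₃ < p`. Since `p ∣ r`, reduction modulo `p`
maps `C_r` homomorphically onto `C_p`, and oriented colourings pull back along
homomorphisms. Hence `χ_o^*(C_r) ≤ p / k = 4 - 4 / (p + 1)`.
-/

theorem eq_of_natCast_eq_of_lt {p m n : ℕ} (h : (m : ZMod p) = n) (hm : m < p) (hn : n < p) :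
    m = n :=
  ((ZMod.natCast_eq_natCast_iff _ _ _).1 h).eq_of_lt_of_lt hm hn

theorem IsFoldColoring.comp_hom {V W : Type*} {G : OGraph V} {H : OGraph W} {b k : ℕ}
    {f : W → Finset (Fin k)} (hf : IsFoldColoring H b k f)
    {φ : V → W} (hφ : G.Hom H φ) : IsFoldColoring G b k (f ∘ φ) :=
  ⟨fun v => hf.1 (φ v), fun _ _ huv => hf.2.1 _ _ (hφ _ _ huv),
    fun _ _ _ _ hxy hzw hxw => hf.2.2 _ _ _ _ (hφ _ _ hxy) (hφ _ _ hzw) hxw⟩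

theorem fracChrom_le_of_isFoldColoring {V : Type*} {G : OGraph V} {b k : ℕ}
    {f : V → Finset (Fin k)} (hb : 0 < b) (hf : IsFoldColoring G b k f) :
    fracChrom G ≤ (k : ℝ) / b := by
  refine csInf_le ⟨0, ?_⟩ ⟨b, k, f, hb, hf, rfl⟩
  rintro x ⟨b', k', f', -, -, rfl⟩
  positivity

theorem dirCycle_hom_castHom {r p : ℕ} (hr : 3 ≤ r) (hp : 3 ≤ p) (hpr : p ∣ r) :
    (dirCycle r hr).Hom (dirCycle p hp) (ZMod.castHom hpr (ZMod p)) := by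
  intro u v (huv : v = u + 1)
  change _ = _ + 1
  rw [huv, map_add, map_one]

section BlockColoring

variable {k p : ℕ} [NeZero p]

def blockColoring (k p : ℕ) [NeZero p] (u : ZMod p) : Finset (Fin p) :=
  (Finset.range k).image fun j : ℕ => (ZMod.finEquiv p).symm (k * u + j)

theorem mem_blockColoring {u : ZMod p} {c : Fin p} :
    c ∈ blockColoring k p u ↔ ∃ j < k, (k * u + j : ZMod p) = ZMod.finEquiv p c := by
  simp only [blockColoring, Finset.mem_image, Finset.mem_range, RingEquiv.symm_apply_eq]

theorem card_blockColoring (hkp : k ≤ p) (u : ZMod p) : (blockColoring k p u).card = k := by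
  rw [blockColoring, Finset.card_image_of_injOn, Finset.card_range]
  intro i hi j hj hij
  simp only [Finset.coe_range, Set.mem_Iio] at hi hj
  simp only [EmbeddingLike.apply_eq_iff_eq, add_right_inj] at hij
  exact eq_of_natCast_eq_of_lt hij (by omega) (by omega)

theorem blockColoring_isFoldColoring (hp : 3 ≤ p) (hkp : 4 * k ≤ p + 1) :
    IsFoldColoring (dirCycle p hp) k p (blockColoring k p) := by
  refine ⟨card_blockColoring (by omega), ?_, ?_⟩
  · rintro u v (rfl : v = u + 1)
    refine Finset.disjoint_left.2 fun c hu hv => ?_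
    obtain ⟨i, hi, hci⟩ := mem_blockColoring.1 hu
    obtain ⟨j, hj, hcj⟩ := mem_blockColoring.1 hv
    have : ((i : ℕ) : ZMod p) = ((k + j : ℕ) : ZMod p) := by
      push_cast
      linear_combination hci - hcj
    have := eq_of_natCast_eq_of_lt this (by omega) (by omega)
    omega
  · rintro x y z w (rfl : y = x + 1) (rfl : w = z + 1) hxw
    obtain ⟨c, hcx, hcw⟩ := Finset.not_disjoint_iff.1 hxw
    obtain ⟨i₁, hi₁, hc₁⟩ := mem_blockColoring.1 hcx
    obtain ⟨i₂, hi₂, hc₂⟩ := mem_blockColoring.1 hcw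
    refine Finset.disjoint_left.2 fun c' hcy hcz => ?_
    obtain ⟨i₃, hi₃, hc₃⟩ := mem_blockColoring.1 hcy
    obtain ⟨i₄, hi₄, hc₄⟩ := mem_blockColoring.1 hcz
    have : ((i₁ + i₄ : ℕ) : ZMod p) = ((2 * k + i₂ + i₃ : ℕ) : ZMod p) := by
      push_cast
      linear_combination hc₁ - hc₂ - hc₃ + hc₄
    have := eq_of_natCast_eq_of_lt this (by omega) (by omega)
    omega

end BlockColoring

theorem stmt15_general (r p k : ℕ) (hr : 3 ≤ r)
    (hpr : p ∣ r) (hk : p = 4 * k - 1) :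
    (∃ f : ZMod r → Finset (Fin p), IsFoldColoring (dirCycle r hr) k p f) ∧
      fracChrom (dirCycle r hr) ≤ 4 - 4 / ((p : ℝ) + 1) := by
  have hp₀ : p ≠ 0 := by
    rintro rfl
    exact absurd (Nat.eq_zero_of_zero_dvd hpr) (by omega)
  have hk₀ : 0 < k := by omega
  have hp : 3 ≤ p := by omega
  have : NeZero p := ⟨hp₀⟩
  have hcol := (blockColoring_isFoldColoring (k := k) hp (by omega)).comp_hom
    (dirCycle_hom_castHom hr hp hpr)
  refine ⟨⟨_, hcol⟩, ?_⟩
  have hpk : (p : ℝ) + 1 = 4 * k := by exact_mod_cast (by omega : p + 1 = 4 * k)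
  calc fracChrom (dirCycle r hr) ≤ (p : ℝ) / k := fracChrom_le_of_isFoldColoring hk₀ hcol
    _ = 4 - 4 / ((p : ℝ) + 1) := by
      rw [hpk]
      field_simp
      linarith

theorem stmt15 (r p k : ℕ) (hr : 3 ≤ r) (hp : Nat.Prime p) (hp4 : p % 4 = 3)
    (hpr : p ∣ r) (hk : p = 4 * k - 1) :
    (∃ f : ZMod r → Finset (Fin p), IsFoldColoring (dirCycle r hr) k p f) ∧
      fracChrom (dirCycle r hr) ≤ 4 - 4 / ((p : ℝ) + 1) :=
  stmt15_general r p k hr hpr hk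
end

section
/- Let m = 2^l and n = 4m+1, and let T_l be the oriented graph with vertices x_i for i ∈ Z/nZ and arcs x_i x_{i+m} and x_i x_{i+m+1}. Then T_l is n-nice: for every vertex x and every sequence α ∈ {+,−}^n, the iterated out/in-neighborhood N^α(x) equals all of V(T_l). -/
/-- The oriented graph `T_l` on `ℤ/(4·2^l+1)ℤ` with arcs `x → x + 2^l` and `x → x + 2^l + 1`. -/
def Tgraph (l : ℕ) : OGraph (ZMod (4 * 2 ^ l + 1)) where
  adj u v := v = u + (2 ^ l : ℕ) ∨ v = u + (2 ^ l : ℕ) + 1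
  irrefl := by
    intro v hv
    have hm : 0 < 2 ^ l := by positivity
    rcases hv with h | h
    · have h1 : ((2 ^ l : ℕ) : ZMod (4 * 2 ^ l + 1)) = 0 := left_eq_add.mp h
      rw [ZMod.natCast_eq_zero_iff] at h1
      have := Nat.le_of_dvd hm h1
      omega
    · have h1 : ((2 ^ l + 1 : ℕ) : ZMod (4 * 2 ^ l + 1)) = 0 := by
        have := left_eq_add.mp (by rwa [add_assoc] at h)
        push_cast
        push_cast at this
        linear_combination this
      rw [ZMod.natCast_eq_zero_iff] at h1
      have := Nat.le_of_dvd (by omega) h1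
      omega
  asymm := by
    intro u v h1 h2
    have key : ∀ a : ℕ, 0 < a → a < 4 * 2 ^ l + 1 →
        ((a : ℕ) : ZMod (4 * 2 ^ l + 1)) ≠ 0 := by
      intro a ha hlt h0
      rw [ZMod.natCast_eq_zero_iff] at h0
      have := Nat.le_of_dvd ha h0
      omega
    have hm : 0 < 2 ^ l := by positivity
    rcases h1 with h1 | h1 <;> rcases h2 with h2 | h2
    · have : ((2 ^ l + 2 ^ l : ℕ) : ZMod (4 * 2 ^ l + 1)) = 0 := by
        have : u = u + ((2 ^ l : ℕ) + (2 ^ l : ℕ)) := by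
          conv_lhs => rw [h2, h1]
          ring
        have := left_eq_add.mp this
        push_cast
        push_cast at this
        linear_combination this
      exact key _ (by omega) (by omega) this
    · have : ((2 ^ l + 2 ^ l + 1 : ℕ) : ZMod (4 * 2 ^ l + 1)) = 0 := by
        have : u = u + ((2 ^ l : ℕ) + (2 ^ l : ℕ) + 1) := by
          conv_lhs => rw [h2, h1]
          ring
        have := left_eq_add.mp this
        push_cast
        push_cast at this
        linear_combination this
      exact key _ (by omega) (by omega) this
    · have : ((2 ^ l + 2 ^ l + 1 : ℕ) : ZMod (4 * 2 ^ l + 1)) = 0 := by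
        have : u = u + ((2 ^ l : ℕ) + (2 ^ l : ℕ) + 1) := by
          conv_lhs => rw [h2, h1]
          ring
        have := left_eq_add.mp this
        push_cast
        push_cast at this
        linear_combination this
      exact key _ (by omega) (by omega) this
    · have : ((2 ^ l + 2 ^ l + 2 : ℕ) : ZMod (4 * 2 ^ l + 1)) = 0 := by
        have : u = u + ((2 ^ l : ℕ) + (2 ^ l : ℕ) + 2) := by
          conv_lhs => rw [h2, h1]
          ring
        have := left_eq_add.mp this
        push_cast
        push_cast at this
        linear_combination this
      exact key _ (by omega) (by omega) this

/-- Out-neighborhood of a set of vertices. -/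
def outN {V : Type*} (G : OGraph V) (S : Set V) : Set V := {v | ∃ u ∈ S, G.adj u v}

/-- In-neighborhood of a set of vertices. -/
def inN {V : Type*} (G : OGraph V) (S : Set V) : Set V := {v | ∃ u ∈ S, G.adj v u}

/-- Iterated out/in-neighborhood along a sign vector `α` (`true` = `+`, `false` = `-`);
the head of the list is applied last, i.e. `N^α(S) = N^{α₁}(N^{α'}(S))`. -/
def iterN {V : Type*} (G : OGraph V) : List Bool → Set V → Set V
  | [], S => S
  | (b :: α), S => (if b then outN G else inN G) (iterN G α S)


/-!
Out- and in-neighbourhoods in `T_l` turn an interval of consecutive residues into an interval one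
longer: the arcs `u → u + m` and `u → u + m + 1` shift an interval by `m` and thicken it by one.
Starting from the singleton `{x}`, after `n` steps the interval has `n + 1 > n` elements, so it
covers `ℤ/nℤ`.
-/

section CyclicInterval

variable {R : Type*} [AddCommGroupWithOne R]

def cyclicInterval (a : R) (t : ℕ) : Set R := {v | ∃ i < t, v = a + i}

theorem cyclicInterval_one (a : R) : cyclicInterval a 1 = {a} := by
  ext v
  simp [cyclicInterval]

variable {G : OGraph R} {c : R} (hG : ∀ u v, G.adj u v ↔ v = u + c ∨ v = u + c + 1)
include hG

theorem outN_cyclicInterval (a : R) {t : ℕ} (ht : 0 < t) :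
    outN G (cyclicInterval a t) = cyclicInterval (a + c) (t + 1) := by
  ext v
  simp only [outN, cyclicInterval, Set.mem_ofPred_eq, hG]
  constructor
  · rintro ⟨u, ⟨i, hi, rfl⟩, rfl | rfl⟩
    · exact ⟨i, by omega, by abel⟩
    · exact ⟨i + 1, by omega, by push_cast; abel⟩
  · rintro ⟨j, hj, rfl⟩
    rcases j with _ | i
    · exact ⟨a, ⟨0, ht, by simp⟩, Or.inl (by simp)⟩
    · exact ⟨a + i, ⟨i, by omega, rfl⟩, Or.inr (by push_cast; abel)⟩

theorem inN_cyclicInterval (a : R) {t : ℕ} (ht : 0 < t) :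
    inN G (cyclicInterval a t) = cyclicInterval (a - c - 1) (t + 1) := by
  ext v
  simp only [inN, cyclicInterval, Set.mem_ofPred_eq, hG]
  constructor
  · rintro ⟨u, ⟨i, hi, rfl⟩, h | h⟩
    · exact ⟨i + 1, by omega, by rw [eq_sub_of_add_eq h.symm]; push_cast; abel⟩
    · exact ⟨i, by omega, by rw [eq_sub_of_add_eq (eq_sub_of_add_eq h.symm)]; abel⟩
  · rintro ⟨j, hj, rfl⟩
    rcases j with _ | i
    · exact ⟨a, ⟨0, ht, by simp⟩, Or.inr (by rw [Nat.cast_zero, add_zero]; abel)⟩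
    · exact ⟨a + i, ⟨i, by omega, rfl⟩, Or.inl (by push_cast; abel)⟩

theorem exists_iterN_singleton_eq_cyclicInterval (α : List Bool) (x : R) :
    ∃ a, iterN G α {x} = cyclicInterval a (α.length + 1) := by
  induction α with
  | nil => exact ⟨x, (cyclicInterval_one x).symm⟩
  | cons b α ih =>
    obtain ⟨a, ha⟩ := ih
    cases b
    · exact ⟨a - c - 1, by simp only [iterN, ha]; exact inN_cyclicInterval hG a (by omega)⟩
    · exact ⟨a + c, by simp only [iterN, ha]; exact outN_cyclicInterval hG a (by omega)⟩

end CyclicInterval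

theorem ZMod.cyclicInterval_eq_univ {n : ℕ} [NeZero n] (a : ZMod n) {t : ℕ} (ht : n ≤ t) :
    cyclicInterval a t = Set.univ :=
  Set.eq_univ_of_forall fun v =>
    ⟨(v - a).val, (ZMod.val_lt _).trans_le ht, by rw [ZMod.natCast_zmod_val]; abel⟩

theorem stmt17 (l : ℕ) (α : List Bool) (hα : α.length = 4 * 2 ^ l + 1)
    (x : ZMod (4 * 2 ^ l + 1)) :
    iterN (Tgraph l) α {x} = Set.univ := by
  obtain ⟨a, ha⟩ := exists_iterN_singleton_eq_cyclicInterval (G := Tgraph l)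
    (fun _ _ => Iff.rfl) α x
  rw [ha]
  exact ZMod.cyclicInterval_eq_univ a (by omega)
end
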